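/- Let m ≥ 2 be an integer. For all real x and t, the series G(x,t|m) = ∑_{n=0}^∞ (t^n/n!) J_{mn}(2x) converges absolutely and G(x,t|m) = {}_H C_0^{(m)}(x², (-x)^m t), i.e. ∑_{n=0}^∞ (t^n/n!) J_{mn}(2x) = ∑_{k=0}^∞ [(-1)^k/(k!)²] H_k^{(m)}(x², (-x)^m t). -/

import Mathlib

/-!
Expanding each `J_{mn}(2x)` turns the left side into the double series
`∑_{n,k} tⁿ/n! · (-1)ᵏ x^(2k+mn) / (k! (k+mn)!)`, which is dominated termwise by the product
of the exponential series of `|t| |x|ᵐ` and `x²`, hence absolutely convergent. Regrouping it along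
the lines `k + mn = K` gives finite groups (`n ≤ K / m`), and the group of `K` is exactly
`(-1)ᴷ/(K!)² · H_K^(m)(x², (-x)ᵐ t)`, since `(-1)ᵏ xᵐⁿ = (-1)ᴷ ((-x)ᵐ)ⁿ`.
-/

/-- The Bessel function of the first kind of integer order `μ`:
`J_μ(x) = ∑_k (-1)^k (x/2)^(2k+μ) / (k! (k+μ)!)`. -/
noncomputable def besselJNat (μ : ℕ) (x : ℝ) : ℝ :=
  ∑' k : ℕ, (-1) ^ k * (x / 2) ^ (2 * k + μ) /
    ((k.factorial : ℝ) * ((k + μ).factorial : ℝ))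

/-- The higher-order Hermite (Gould–Hopper) polynomials (real arguments):
`H_n^(m)(u,v) = n! ∑_{k=0}^{⌊n/m⌋} u^(n-mk) v^k / ((n-mk)! k!)`. -/
noncomputable def gouldHopper (m n : ℕ) (u v : ℝ) : ℝ :=
  (n.factorial : ℝ) * ∑ k ∈ Finset.range (n / m + 1),
    u ^ (n - m * k) * v ^ k / (((n - m * k).factorial : ℝ) * (k.factorial : ℝ))

open Finset
open scoped Nat

theorem Summable.summable_norm_tsum_prod {E α β : Type*} [NormedAddCommGroup E] [CompleteSpace E]
    {f : α × β → E} (hf : Summable fun p => ‖f p‖) :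
    Summable fun a => ‖∑' b, f (a, b)‖ :=
  hf.prod.of_nonneg_of_le (fun _ => norm_nonneg _) fun a =>
    norm_tsum_le_tsum_norm (hf.prod_factor a)

theorem Nat.lt_div_add_one_iff_mul_le {m j k : ℕ} (hm : 0 < m) : j < k / m + 1 ↔ m * j ≤ k := by
  rw [Nat.lt_succ_iff, Nat.le_div_iff_mul_le hm, mul_comm]

theorem Summable.tsum_prod_eq_tsum_sum_range_div {E : Type*} [AddCommGroup E] [UniformSpace E]
    [IsUniformAddGroup E] [CompleteSpace E] [T0Space E] {m : ℕ} (hm : 0 < m) {f : ℕ × ℕ → E}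
    (hf : Summable f) :
    ∑' p, f p = ∑' k, ∑ j ∈ range (k / m + 1), f (j, k - m * j) := by
  let e : ℕ × ℕ → ℕ × ℕ := fun p => (p.2 + m * p.1, p.1)
  have he : Function.Injective e := by
    rintro ⟨n, i⟩ ⟨n', i'⟩ h
    simp only [e, Prod.mk.injEq] at h
    obtain ⟨hi, rfl⟩ := h
    simp_all
  let g : ℕ × ℕ → E := fun q => if m * q.2 ≤ q.1 then f (q.2, q.1 - m * q.2) else 0
  have hge : ∀ p, g (e p) = f p := by
    rintro ⟨n, i⟩
    simp [g, e]
  have hg : ∀ q ∉ Set.range e, g q = 0 := by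
    rintro ⟨k, j⟩ hq
    refine if_neg fun (hjk : m * j ≤ k) => hq ⟨(j, k - m * j), ?_⟩
    simp only [e, Prod.mk.injEq, and_true]
    omega
  have hgs : Summable g := (he.summable_iff hg).1 (hf.congr fun p => (hge p).symm)
  rw [← tsum_congr hge, he.tsum_eq (Function.support_subset_iff'.2 hg), hgs.tsum_prod]
  refine tsum_congr fun k => ?_
  rw [tsum_eq_sum (s := range (k / m + 1)) fun j hj => if_neg ?_]
  · exact sum_congr rfl fun j hj => if_pos ((Nat.lt_div_add_one_iff_mul_le hm).1 (mem_range.1 hj))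
  · rwa [mem_range, Nat.lt_div_add_one_iff_mul_le hm] at hj

theorem besselJNat_two_mul (μ : ℕ) (x : ℝ) :
    besselJNat μ (2 * x) = ∑' k : ℕ, (-1) ^ k * x ^ (2 * k + μ) / (k ! * (k + μ)! : ℝ) := by
  simp only [besselJNat, mul_div_cancel_left₀ x two_ne_zero]

noncomputable def besselGenTerm (m : ℕ) (x t : ℝ) (p : ℕ × ℕ) : ℝ :=
  t ^ p.1 / p.1 ! * ((-1) ^ p.2 * x ^ (2 * p.2 + m * p.1) / (p.2 ! * (p.2 + m * p.1)!))

theorem pow_div_factorial_mul_besselJNat (m : ℕ) (x t : ℝ) (n : ℕ) :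
    t ^ n / n ! * besselJNat (m * n) (2 * x) = ∑' k, besselGenTerm m x t (n, k) := by
  rw [besselJNat_two_mul, ← tsum_mul_left]
  rfl

theorem abs_besselGenTerm_le (m : ℕ) (x t : ℝ) (p : ℕ × ℕ) :
    |besselGenTerm m x t p| ≤ (|t| * |x| ^ m) ^ p.1 / p.1 ! * ((x ^ 2) ^ p.2 / p.2 !) := by
  obtain ⟨n, k⟩ := p
  have hfac : (1 : ℝ) ≤ (k + m * n)! := mod_cast (k + m * n).factorial_pos
  calc |besselGenTerm m x t (n, k)|
      = (|t| * |x| ^ m) ^ n / n ! * ((x ^ 2) ^ k / (k ! * (k + m * n)!)) := by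
        simp only [besselGenTerm, abs_mul, abs_div, abs_pow, abs_neg, abs_one, one_pow,
          Nat.abs_cast, mul_pow, pow_add, pow_mul, sq_abs]
        ring
    _ ≤ (|t| * |x| ^ m) ^ n / n ! * ((x ^ 2) ^ k / k !) := by
        gcongr
        exact le_mul_of_one_le_right (by positivity) hfac

theorem summable_abs_besselGenTerm (m : ℕ) (x t : ℝ) :
    Summable fun p => |besselGenTerm m x t p| :=
  ((Real.summable_pow_div_factorial _).mul_of_nonneg (Real.summable_pow_div_factorial _)
    (fun _ => by positivity) fun _ => by positivity).of_nonneg_of_le (fun _ => abs_nonneg _)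
    (abs_besselGenTerm_le m x t)

theorem besselGenTerm_eq {m j k : ℕ} (hjk : m * j ≤ k) (x t : ℝ) :
    besselGenTerm m x t (j, k - m * j) = (-1) ^ k / (k ! : ℝ) ^ 2 *
      (k ! * ((x ^ 2) ^ (k - m * j) * ((-x) ^ m * t) ^ j / ((k - m * j)! * j !))) := by
  obtain ⟨i, rfl⟩ := Nat.exists_eq_add_of_le hjk
  rw [Nat.add_sub_cancel_left, besselGenTerm, add_comm i]
  have hpow : ((-x) ^ m * t) ^ j = (-1) ^ (m * j) * (x ^ (m * j) * t ^ j) := by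
    rw [neg_pow, mul_pow, mul_pow, ← pow_mul, ← pow_mul]
    ring
  rw [hpow, pow_add]
  have hsq : ((-1 : ℝ) ^ (m * j)) ^ 2 = 1 := by rw [← pow_mul, mul_comm, pow_mul]; norm_num
  field_simp
  linear_combination -(t ^ j * x ^ (m * j) * x ^ (2 * i) * (-1) ^ i) * hsq

/-- For `m ≥ 2` and all real `x, t`, the series `G(x,t|m) = ∑_n (t^n/n!) J_{mn}(2x)`
converges absolutely and equals the Hermite-based Tricomi function
`_H C_0^(m)(x², (-x)^m t) = ∑_k [(-1)^k/(k!)²] H_k^(m)(x², (-x)^m t)`. -/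
theorem generating_function_eq_hermiteTricomi (m : ℕ) (hm : 2 ≤ m) (x t : ℝ) :
    Summable (fun n : ℕ => |t ^ n / (n.factorial : ℝ) * besselJNat (m * n) (2 * x)|) ∧
      ∑' n : ℕ, t ^ n / (n.factorial : ℝ) * besselJNat (m * n) (2 * x)
        = ∑' k : ℕ, (-1) ^ k / ((k.factorial : ℝ) ^ 2) *
            gouldHopper m k (x ^ 2) ((-x) ^ m * t) := by
  have hrow := pow_div_factorial_mul_besselJNat m x t
  have habs := summable_abs_besselGenTerm m x t
  have hm0 : 0 < m := by omega
  refine ⟨?_, ?_⟩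
  · simpa only [hrow, Real.norm_eq_abs] using
      Summable.summable_norm_tsum_prod (f := besselGenTerm m x t) (by simpa only [Real.norm_eq_abs])
  · rw [tsum_congr hrow, ← habs.of_abs.tsum_prod, habs.of_abs.tsum_prod_eq_tsum_sum_range_div hm0]
    refine tsum_congr fun k => ?_
    rw [gouldHopper, mul_sum, mul_sum]
    exact sum_congr rfl fun j hj =>
      besselGenTerm_eq ((Nat.lt_div_add_one_iff_mul_le hm0).1 (mem_range.1 hj)) x t
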